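/- Let K be a group acting on a set X and θ : K → G a group homomorphism such that every non-identity element of F = ker θ acts on X without fixed points. Fix a non-trivial g ∈ G and let S_g = {κ ∈ K : θ(κ) = g, κ has finite order, Fix(κ) ≠ ∅}. Then the map κ ↦ F·Fix(κ) induces a bijection from the set of orbits of S_g under conjugation by elements of F onto the set of subsets of X of the form F·Fix(κ) with κ ∈ S_g. -/

import Mathlib

/-!
A point lies in `F ⬝ Fix κ` exactly when it is fixed by some `F`-conjugate of `κ`, so the
saturated fixed-point set is a conjugacy invariant. Conversely, if `F ⬝ Fix κ = F ⬝ Fix κ'`,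
a fixed point of `κ'` is fixed by some `γ κ γ⁻¹` with `γ ∈ F`; then `κ'⁻¹ γ κ γ⁻¹` lies in `F`
and has a fixed point, so it is trivial by freeness and `κ' = γ κ γ⁻¹`.
-/

/-- The `ker θ`-saturation of the fixed-point set of `κ` in `X`. -/
def kerSaturatedFix {K G : Type*} (X : Type*) [Group K] [Group G] [MulAction K X]
    (θ : K →* G) (κ : K) : Set X :=
  {x : X | ∃ γ ∈ θ.ker, ∃ y : X, κ • y = y ∧ γ • y = x}

open MulAction

theorem bijective_quotLift_of_rel_iff {α β : Type*} {r : α → α → Prop} (φ : α → β)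
    (hr : ∀ a b, r a b ↔ φ a = φ b) :
    Function.Bijective (Quot.lift (fun a => (⟨φ a, a, rfl⟩ : {b // ∃ a, b = φ a}))
      (fun a b hab => Subtype.ext ((hr a b).1 hab))) := by
  refine ⟨?_, ?_⟩
  · rintro ⟨a⟩ ⟨b⟩ hab
    exact Quot.sound ((hr a b).2 (congrArg Subtype.val hab))
  · rintro ⟨_, a, rfl⟩
    exact ⟨Quot.mk _ a, rfl⟩

section KerSaturatedFix

variable {K G : Type*} {X : Type*} [Group K] [Group G] [MulAction K X] {θ : K →* G}

theorem mem_kerSaturatedFix_iff {κ : K} {x : X} :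
    x ∈ kerSaturatedFix X θ κ ↔ ∃ γ ∈ θ.ker, x ∈ fixedBy X (γ * κ * γ⁻¹) := by
  simp_rw [← smul_fixedBy, Set.mem_smul_set]
  rfl

theorem kerSaturatedFix_conj {κ γ : K} (hγ : γ ∈ θ.ker) :
    kerSaturatedFix X θ (γ * κ * γ⁻¹) = kerSaturatedFix X θ κ := by
  ext x
  simp_rw [mem_kerSaturatedFix_iff]
  constructor
  · rintro ⟨δ, hδ, hx⟩
    exact ⟨δ * γ, mul_mem hδ hγ, by simpa [mul_assoc] using hx⟩
  · rintro ⟨δ, hδ, hx⟩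
    exact ⟨δ * γ⁻¹, mul_mem hδ (inv_mem hγ), by simpa [mul_assoc] using hx⟩

theorem eq_of_map_eq_of_mem_fixedBy (hfree : ∀ f : K, f ∈ θ.ker → f ≠ 1 → ∀ x : X, f • x ≠ x)
    {κ κ' : K} {x : X} (hθ : θ κ = θ κ')
    (hx : x ∈ fixedBy X κ) (hx' : x ∈ fixedBy X κ') : κ = κ' := by
  have hker : κ'⁻¹ * κ ∈ θ.ker := by simp [MonoidHom.mem_ker, hθ]
  have hfix : (κ'⁻¹ * κ) • x = x := by
    rw [mul_smul, inv_smul_eq_iff, mem_fixedBy.1 hx, mem_fixedBy.1 hx']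
  by_contra hne
  exact hfree _ hker (fun h => hne (inv_mul_eq_one.1 h).symm) x hfix

theorem exists_conj_of_kerSaturatedFix_eq
    (hfree : ∀ f : K, f ∈ θ.ker → f ≠ 1 → ∀ x : X, f • x ≠ x) {κ κ' : K} {x : X} (hθ : θ κ = θ κ')
    (hx : x ∈ fixedBy X κ') (heq : kerSaturatedFix X θ κ = kerSaturatedFix X θ κ') :
    ∃ γ ∈ θ.ker, κ' = γ * κ * γ⁻¹ := by
  have hxκ' : x ∈ kerSaturatedFix X θ κ' :=
    mem_kerSaturatedFix_iff.2 ⟨1, one_mem _, by simpa using hx⟩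
  obtain ⟨γ, hγ, hxγ⟩ := mem_kerSaturatedFix_iff.1 (heq ▸ hxκ')
  have hθγ : θ (γ * κ * γ⁻¹) = θ κ' := by simp [MonoidHom.mem_ker.1 hγ, hθ]
  exact ⟨γ, hγ, (eq_of_map_eq_of_mem_fixedBy hfree hθγ hxγ hx).symm⟩

theorem exists_conj_iff_kerSaturatedFix_eq
    (hfree : ∀ f : K, f ∈ θ.ker → f ≠ 1 → ∀ x : X, f • x ≠ x) {κ κ' : K} (hθ : θ κ = θ κ')
    (hfix : ∃ x : X, κ' • x = x) :
    (∃ γ ∈ θ.ker, κ' = γ * κ * γ⁻¹) ↔ kerSaturatedFix X θ κ = kerSaturatedFix X θ κ' := by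
  constructor
  · rintro ⟨γ, hγ, rfl⟩
    exact (kerSaturatedFix_conj hγ).symm
  · obtain ⟨x, hx⟩ := hfix
    exact exists_conj_of_kerSaturatedFix_eq hfree hθ hx

end KerSaturatedFix

theorem bijection_conjClasses_saturatedFixSets_general
    {K G X : Type*} [Group K] [Group G] [MulAction K X]
    (θ : K →* G)
    (hfree : ∀ f : K, f ∈ θ.ker → f ≠ 1 → ∀ x : X, f • x ≠ x)
    (g : G) :
    ∃ f : Quot (fun κ κ' : {κ : K // θ κ = g ∧ IsOfFinOrder κ ∧ ∃ x : X, κ • x = x} =>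
            ∃ γ ∈ θ.ker, (κ' : K) = γ * (κ : K) * γ⁻¹) →
          {C : Set X // ∃ κ : {κ : K // θ κ = g ∧ IsOfFinOrder κ ∧ ∃ x : X, κ • x = x},
            C = kerSaturatedFix X θ (κ : K)},
      Function.Bijective f ∧
      ∀ κ : {κ : K // θ κ = g ∧ IsOfFinOrder κ ∧ ∃ x : X, κ • x = x},
        f (Quot.mk _ κ) = ⟨kerSaturatedFix X θ (κ : K), κ, rfl⟩ := by
  refine ⟨_, bijective_quotLift_of_rel_iff _ fun κ κ' => ?_, fun _ => rfl⟩
  exact exists_conj_iff_kerSaturatedFix_eq hfree (κ.2.1.trans κ'.2.1.symm) κ'.2.2.2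

/-- if `F = ker θ` acts freely on `X` and `g ∈ G` is non-trivial,
then `κ ↦ F ⬝ Fix κ` induces a bijection from the set of `F`-conjugacy classes of
finite-order lifts of `g` having fixed points, onto the set of subsets of `X` of the
form `F ⬝ Fix κ` for such lifts `κ`. -/
theorem bijection_conjClasses_saturatedFixSets
    {K G X : Type*} [Group K] [Group G] [MulAction K X]
    (θ : K →* G)
    (hfree : ∀ f : K, f ∈ θ.ker → f ≠ 1 → ∀ x : X, f • x ≠ x)
    (g : G) (hg : g ≠ 1) :
    ∃ f : Quot (fun κ κ' : {κ : K // θ κ = g ∧ IsOfFinOrder κ ∧ ∃ x : X, κ • x = x} =>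
            ∃ γ ∈ θ.ker, (κ' : K) = γ * (κ : K) * γ⁻¹) →
          {C : Set X // ∃ κ : {κ : K // θ κ = g ∧ IsOfFinOrder κ ∧ ∃ x : X, κ • x = x},
            C = kerSaturatedFix X θ (κ : K)},
      Function.Bijective f ∧
      ∀ κ : {κ : K // θ κ = g ∧ IsOfFinOrder κ ∧ ∃ x : X, κ • x = x},
        f (Quot.mk _ κ) = ⟨kerSaturatedFix X θ (κ : K), κ, rfl⟩ :=
  bijection_conjClasses_saturatedFixSets_general θ hfree g
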